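/- arXiv:1706.06186 — 3 statements merged into one kernel-verified Lean document; each statement's English description precedes it below -/
import Mathlib

section
/- Let λ(θ) = 2π cos θ / sin²θ on the strip (θ,t) ∈ (0,π/2)×ℝ. The Gauss curvature of the conformal metric λ²(dθ² + dt²) is K(θ) = (1/4π²) · tan²θ · (tan²θ − 2). In particular K(θ) ≥ 0 if and only if θ ≥ arctan √2. -/
/-!
On the strip, `log λ = log 2π + log cos θ - 2 log sin θ`, so `(log λ)' = -tan θ - 2 cot θ` and
`(log λ)'' = -1/cos² θ + 2/sin² θ`. Dividing `-(log λ)''` by `λ² = 4π² cos² θ / sin⁴ θ` gives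
`(tan⁴ θ - 2 tan² θ)/4π²`, whose sign is that of `tan² θ - 2`; as `tan` is increasing on
`(0, π/2)`, this is nonnegative exactly when `θ ≥ arctan √2`.
-/

open Real

noncomputable section

/-- The conformal factor `λ(θ) = 2π cos θ / sin² θ`. -/
def lam (θ : ℝ) : ℝ := 2 * π * Real.cos θ / Real.sin θ ^ 2

/-- The Gauss curvature of the conformal metric `λ(θ)²(dθ² + dt²)`, computed by the
formula `K = −Δ(log λ)/λ²`; since `λ` depends only on `θ`, the Euclidean Laplacian of
`log λ` is just `(log ∘ λ)''`. -/
def gaussK (θ : ℝ) : ℝ :=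
  -(deriv (deriv fun s : ℝ => Real.log (lam s)) θ) / lam θ ^ 2

open Set

theorem Real.hasDerivAt_cot {x : ℝ} (hx : sin x ≠ 0) :
    HasDerivAt cot (-(1 / sin x ^ 2)) x := by
  have hcot : cot = fun s => cos s / sin s := funext fun s => cot_eq_cos_div_sin s
  rw [hcot]
  refine ((hasDerivAt_cos x).div (hasDerivAt_sin x) hx).congr_deriv ?_
  rw [← sin_sq_add_cos_sq x]
  ring

lemma sin_pos_of_mem_Ioo_zero_pi_div_two {θ : ℝ} (hθ : θ ∈ Ioo 0 (π / 2)) : 0 < sin θ :=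
  sin_pos_of_pos_of_lt_pi hθ.1 (by linarith [hθ.2, pi_pos])

lemma cos_pos_of_mem_Ioo_zero_pi_div_two {θ : ℝ} (hθ : θ ∈ Ioo 0 (π / 2)) : 0 < cos θ :=
  cos_pos_of_mem_Ioo ⟨by linarith [hθ.1, pi_pos], hθ.2⟩

lemma log_lam_eqOn :
    EqOn (fun s => log (lam s)) (fun s => log (2 * π) + log (cos s) - 2 * log (sin s))
      (Ioo 0 (π / 2)) := by
  intro s hs
  have hsin := sin_pos_of_mem_Ioo_zero_pi_div_two hs
  have hcos := cos_pos_of_mem_Ioo_zero_pi_div_two hs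
  simp only [lam]
  rw [log_div (by positivity) (by positivity), log_mul (by positivity) hcos.ne', log_pow]
  push_cast
  ring

lemma hasDerivAt_log_lam {s : ℝ} (hs : s ∈ Ioo 0 (π / 2)) :
    HasDerivAt (fun s => log (lam s)) (-tan s - 2 * cot s) s := by
  have hlogcos : HasDerivAt (fun s => log (cos s)) (-tan s) s := by
    simpa only [neg_div, ← tan_eq_sin_div_cos] using
      (hasDerivAt_cos s).log (cos_pos_of_mem_Ioo_zero_pi_div_two hs).ne'
  have hlogsin : HasDerivAt (fun s => log (sin s)) (cot s) s := by
    simpa only [← cot_eq_cos_div_sin] using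
      (hasDerivAt_sin s).log (sin_pos_of_mem_Ioo_zero_pi_div_two hs).ne'
  have hsplit : HasDerivAt (fun s => log (2 * π) + log (cos s) - 2 * log (sin s))
      (-tan s - 2 * cot s) s := by
    exact (hlogcos.const_add (log (2 * π))).sub (hlogsin.const_mul 2)
  exact hsplit.congr_of_eventuallyEq (log_lam_eqOn.eventuallyEq_of_mem (isOpen_Ioo.mem_nhds hs))

lemma deriv_deriv_log_lam {θ : ℝ} (hθ : θ ∈ Ioo 0 (π / 2)) :
    deriv (deriv fun s => log (lam s)) θ = -(1 / cos θ ^ 2) + 2 / sin θ ^ 2 := by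
  have hderiv : (deriv fun s => log (lam s)) =ᶠ[nhds θ] fun s => -tan s - 2 * cot s := by
    filter_upwards [isOpen_Ioo.mem_nhds hθ] with s hs using (hasDerivAt_log_lam hs).deriv
  have hsecond : HasDerivAt (fun s => -tan s - 2 * cot s)
      (-(1 / cos θ ^ 2) - 2 * -(1 / sin θ ^ 2)) θ :=
    (hasDerivAt_tan (cos_pos_of_mem_Ioo_zero_pi_div_two hθ).ne').neg.sub
      ((hasDerivAt_cot (sin_pos_of_mem_Ioo_zero_pi_div_two hθ).ne').const_mul 2)
  rw [hderiv.deriv_eq, hsecond.deriv]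
  ring

lemma gaussK_eq {θ : ℝ} (hθ : θ ∈ Ioo 0 (π / 2)) :
    gaussK θ = 1 / (4 * π ^ 2) * tan θ ^ 2 * (tan θ ^ 2 - 2) := by
  have hsin := sin_pos_of_mem_Ioo_zero_pi_div_two hθ
  have hcos := cos_pos_of_mem_Ioo_zero_pi_div_two hθ
  rw [gaussK, deriv_deriv_log_lam hθ, lam, tan_eq_sin_div_cos]
  field_simp
  ring

lemma sqrt_two_le_tan_iff {θ : ℝ} (hθ : θ ∈ Ioo 0 (π / 2)) :
    √2 ≤ tan θ ↔ arctan √2 ≤ θ := by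
  rw [← arctan_le_arctan_iff, arctan_tan (by linarith [hθ.1, pi_pos]) hθ.2]

/-- The Gauss curvature of the metric `λ²(dθ²+dt²)` on the strip `(0,π/2) × ℝ` equals
`(1/4π²)·tan²θ·(tan²θ − 2)`, and it is nonnegative iff `θ ≥ arctan √2`. -/
theorem curvature_of_conformal_strip_metric :
    ∀ θ ∈ Set.Ioo (0 : ℝ) (π / 2),
      gaussK θ = 1 / (4 * π ^ 2) * Real.tan θ ^ 2 * (Real.tan θ ^ 2 - 2) ∧
        (0 ≤ gaussK θ ↔ Real.arctan (Real.sqrt 2) ≤ θ) := by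
  intro θ hθ
  refine ⟨gaussK_eq hθ, ?_⟩
  have htan : 0 < tan θ := tan_pos_of_pos_of_lt_pi_div_two hθ.1 hθ.2
  have hfactor : 0 < 1 / (4 * π ^ 2) * tan θ ^ 2 := by positivity
  rw [gaussK_eq hθ, mul_nonneg_iff_of_pos_left hfactor, sub_nonneg, ← sqrt_two_le_tan_iff hθ,
    sqrt_le_left htan.le]
end
end

section
/- Let t₁, t₂ : (0, θ₀) → ℝ be two solutions of the equation (2π cos θ / sin²θ)·tᵢ'(θ)/√(tᵢ'(θ)²+1) = cᵢ with lim_{θ→0} t₁(θ) = lim_{θ→0} t₂(θ). Then the length of the vertical segment from (θ, t₁(θ)) to (θ, t₂(θ)) with respect to the metric (2π cos θ / sin²θ)·√(dt² + dθ²) equals (2π cos θ / sin²θ)·|t₁(θ) − t₂(θ)| and is O(θ) as θ → 0. -/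
open Real Set Filter Asymptotics
open scoped Topology

noncomputable section

/-- The length of the vertical segment `{θ} × [t₁(θ), t₂(θ)]` with respect to the
conformal metric `λ(θ)·√(dt² + dθ²)`: the integral of the conformal factor over the
segment. -/
def vertLen (t₁ t₂ : ℝ → ℝ) (θ : ℝ) : ℝ := |∫ _u in (t₁ θ)..(t₂ θ), lam θ|

lemma lam_pos {θ : ℝ} (h1 : 0 < θ) (h2 : θ < π / 2) : 0 < lam θ := by
  have hc : 0 < Real.cos θ := Real.cos_pos_of_mem_Ioo ⟨by linarith [Real.pi_pos], h2⟩
  have hs : 0 < Real.sin θ := Real.sin_pos_of_pos_of_lt_pi h1 (by linarith [Real.pi_pos])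
  have := Real.pi_pos
  unfold lam; positivity

lemma deriv_bd {c θ : ℝ} {t : ℝ → ℝ} (h1 : 0 < θ) (h2 : θ ≤ π / 3)
    (hlam : 2 * |c| ≤ lam θ)
    (hode : lam θ * deriv t θ / Real.sqrt (deriv t θ ^ 2 + 1) = c) :
    |deriv t θ| ≤ 2 * |c| / π * θ ^ 2 := by
  have hpi := Real.pi_pos
  set a := deriv t θ with ha
  have hL : 0 < lam θ := lam_pos h1 (by linarith)
  have hspos : 0 < Real.sqrt (a ^ 2 + 1) := Real.sqrt_pos.2 (by positivity)
  have hss : Real.sqrt (a ^ 2 + 1) ^ 2 = a ^ 2 + 1 := Real.sq_sqrt (by positivity)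
  have heq : lam θ * a = c * Real.sqrt (a ^ 2 + 1) := by
    field_simp at hode; linarith [hode]
  have hsq : (lam θ) ^ 2 * a ^ 2 = c ^ 2 * (a ^ 2 + 1) := by
    have := congrArg (· ^ 2) heq
    simp only [mul_pow] at this
    rw [hss] at this; linarith
  have hc2 : c ^ 2 ≤ (lam θ) ^ 2 / 4 := by nlinarith [abs_nonneg c, sq_abs c]
  have ha2 : (|a| * lam θ) ^ 2 ≤ (2 * |c|) ^ 2 := by
    have h1' : a ^ 2 * (lam θ) ^ 2 ≤ 4 * c ^ 2 := by nlinarith [sq_nonneg a]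
    calc (|a| * lam θ) ^ 2 = a ^ 2 * (lam θ) ^ 2 := by rw [mul_pow, sq_abs]
    _ ≤ 4 * c ^ 2 := h1'
    _ = (2 * |c|) ^ 2 := by rw [mul_pow, sq_abs]; ring
  have hal : |a| * lam θ ≤ 2 * |c| := by
    have h0 : 0 ≤ |a| * lam θ := by positivity
    have h0' : 0 ≤ 2 * |c| := by positivity
    nlinarith
  -- now bound 2|c|/lam θ by 2|c|/π θ²
  have hcos : (1 : ℝ) / 2 ≤ Real.cos θ := by
    have := Real.cos_le_cos_of_nonneg_of_le_pi (le_of_lt h1) (by linarith) h2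
    rwa [Real.cos_pi_div_three] at this
  have hsin : Real.sin θ ≤ θ := Real.sin_le h1.le
  have hsinpos : 0 < Real.sin θ := Real.sin_pos_of_pos_of_lt_pi h1 (by linarith)
  have hlamlb : π / θ ^ 2 ≤ lam θ := by
    unfold lam
    rw [div_le_div_iff₀ (by positivity) (by positivity)]
    have hsin2 : Real.sin θ ^ 2 ≤ θ ^ 2 := by nlinarith
    nlinarith [mul_nonneg (mul_nonneg hpi.le (by linarith : (0:ℝ) ≤ Real.cos θ - 1/2)) (sq_nonneg θ)]
  have hLb : π / θ ^ 2 ≤ lam θ := hlamlb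
  have h2c : |a| ≤ 2 * |c| / lam θ := by
    rw [le_div_iff₀ hL]; exact hal
  refine h2c.trans ?_
  have hπθ : 0 < π / θ ^ 2 := by positivity
  calc 2 * |c| / lam θ ≤ 2 * |c| / (π / θ ^ 2) := by
        gcongr
      _ = 2 * |c| / π * θ ^ 2 := by field_simp

lemma val_bd {θ₀ δ M T : ℝ} {t : ℝ → ℝ} (hδ : δ ≤ θ₀) (hM : 0 ≤ M)
    (ht : ContDiffOn ℝ (⊤ : ℕ∞) t (Ioo 0 θ₀))
    (hd : ∀ x ∈ Ioo (0 : ℝ) δ, |deriv t x| ≤ M * x ^ 2)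
    (hlim : Tendsto t (𝓝[>] (0 : ℝ)) (𝓝 T)) {θ : ℝ} (hθ : θ ∈ Ioo (0 : ℝ) δ) :
    |t θ - T| ≤ M * θ ^ 3 := by
  obtain ⟨hθ1, hθ2⟩ := hθ
  have hdiff : DifferentiableOn ℝ t (Ioo 0 θ₀) := ht.differentiableOn (by simp)
  have key : ∀ a ∈ Ioo (0 : ℝ) θ, |t θ - t a| ≤ M * θ ^ 3 := by
    intro a ⟨ha0, haθ⟩
    have hsub : Icc a θ ⊆ Ioo 0 θ₀ := fun x hx =>
      ⟨lt_of_lt_of_le ha0 hx.1, lt_of_le_of_lt hx.2 (lt_of_lt_of_le hθ2 hδ)⟩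
    have hder : ∀ x ∈ Icc a θ, HasDerivWithinAt t (deriv t x) (Icc a θ) x := fun x hx =>
      (((hdiff x (hsub hx)).differentiableAt
        (isOpen_Ioo.mem_nhds (hsub hx))).hasDerivAt).hasDerivWithinAt
    have bound : ∀ x ∈ Ico a θ, ‖deriv t x‖ ≤ M * θ ^ 2 := by
      intro x hx
      have hx' : x ∈ Ioo (0 : ℝ) δ := ⟨lt_of_lt_of_le ha0 hx.1, lt_trans hx.2 hθ2⟩
      calc ‖deriv t x‖ = |deriv t x| := rfl
        _ ≤ M * x ^ 2 := hd x hx'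
        _ ≤ M * θ ^ 2 := by
            have : 0 ≤ x := hx'.1.le
            gcongr
            exact hx.2.le
    have := norm_image_sub_le_of_norm_deriv_le_segment' hder bound θ
      (right_mem_Icc.2 haθ.le)
    have h3 : M * θ ^ 2 * (θ - a) ≤ M * θ ^ 3 := by nlinarith [mul_nonneg (mul_nonneg hM (sq_nonneg θ)) ha0.le]
    calc |t θ - t a| = ‖t θ - t a‖ := rfl
      _ ≤ M * θ ^ 2 * (θ - a) := this
      _ ≤ M * θ ^ 3 := h3
  have h1 : Tendsto (fun a => |t θ - t a|) (𝓝[>] (0 : ℝ)) (𝓝 |t θ - T|) :=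
    (tendsto_const_nhds.sub hlim).abs
  have h2 : ∀ᶠ a in 𝓝[>] (0 : ℝ), |t θ - t a| ≤ M * θ ^ 3 := by
    filter_upwards [Ioo_mem_nhdsGT_of_mem (left_mem_Ico.2 hθ1)] with a ha
    exact key a ha
  exact le_of_tendsto h1 h2

/-- If `t₁, t₂ : (0,θ₀) → ℝ` are two solutions of
`(2π cos θ/sin²θ)·tᵢ'/√(tᵢ'²+1) = cᵢ` with the same limit as `θ → 0⁺`, then the length
of the vertical segment from `(θ, t₁(θ))` to `(θ, t₂(θ))` in the metric
`(2π cos θ/sin²θ)·√(dt²+dθ²)` equals `(2π cos θ/sin²θ)·|t₁(θ) − t₂(θ)|` and is `O(θ)`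
as `θ → 0⁺`. -/
theorem vertical_segment_length (θ₀ c₁ c₂ T : ℝ) (hθ₀ : 0 < θ₀) (hθ₀' : θ₀ ≤ π / 2) (t₁ t₂ : ℝ → ℝ)
    (ht₁ : ContDiffOn ℝ (⊤ : ℕ∞) t₁ (Ioo 0 θ₀)) (ht₂ : ContDiffOn ℝ (⊤ : ℕ∞) t₂ (Ioo 0 θ₀))
    (hode₁ : ∀ θ ∈ Ioo (0 : ℝ) θ₀,
      lam θ * deriv t₁ θ / Real.sqrt (deriv t₁ θ ^ 2 + 1) = c₁)
    (hode₂ : ∀ θ ∈ Ioo (0 : ℝ) θ₀,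
      lam θ * deriv t₂ θ / Real.sqrt (deriv t₂ θ ^ 2 + 1) = c₂)
    (hlim₁ : Tendsto t₁ (𝓝[>] (0 : ℝ)) (𝓝 T))
    (hlim₂ : Tendsto t₂ (𝓝[>] (0 : ℝ)) (𝓝 T)) :
    (∀ θ ∈ Ioo (0 : ℝ) θ₀, vertLen t₁ t₂ θ = lam θ * |t₁ θ - t₂ θ|) ∧
      (vertLen t₁ t₂ =O[𝓝[>] (0 : ℝ)] fun θ => θ) := by
  have hpi := Real.pi_pos
  have habs : ∀ θ ∈ Ioo (0 : ℝ) θ₀, vertLen t₁ t₂ θ = lam θ * |t₁ θ - t₂ θ| := by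
    intro θ hθ
    have hl : 0 ≤ lam θ := (lam_pos hθ.1 (lt_of_lt_of_le hθ.2 hθ₀')).le
    unfold vertLen
    rw [intervalIntegral.integral_const, smul_eq_mul, abs_mul, abs_of_nonneg hl,
      abs_sub_comm, mul_comm]
  refine ⟨habs, ?_⟩
  set K := max |c₁| |c₂| with hK
  have hK0 : 0 ≤ K := le_trans (abs_nonneg c₁) (le_max_left _ _)
  set M := 2 * K / π with hM
  have hM0 : 0 ≤ M := by positivity
  set δ := min (min θ₀ (π / 3)) (Real.sqrt (π / (2 * (K + 1)))) with hδdef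
  have hδθ₀ : δ ≤ θ₀ := le_trans (min_le_left _ _) (min_le_left _ _)
  have hδπ3 : δ ≤ π / 3 := le_trans (min_le_left _ _) (min_le_right _ _)
  have hδpos : 0 < δ := by
    refine lt_min (lt_min hθ₀ (by positivity)) (Real.sqrt_pos.2 (by positivity))
  -- key pointwise bounds on (0, δ)
  have hlamc : ∀ θ ∈ Ioo (0 : ℝ) δ, 2 * K ≤ lam θ := by
    intro θ ⟨h1, h2⟩
    have hθπ3 : θ ≤ π / 3 := le_trans h2.le hδπ3
    have hθ2 : θ ^ 2 < π / (2 * (K + 1)) := by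
      have h3 : θ < Real.sqrt (π / (2 * (K + 1))) := lt_of_lt_of_le h2 (min_le_right _ _)
      have := (Real.lt_sqrt h1.le).1 h3
      linarith
    have hcos : (1 : ℝ) / 2 ≤ Real.cos θ := by
      have := Real.cos_le_cos_of_nonneg_of_le_pi h1.le (by linarith) hθπ3
      rwa [Real.cos_pi_div_three] at this
    have hsin : Real.sin θ ≤ θ := Real.sin_le h1.le
    have hsinpos : 0 < Real.sin θ := Real.sin_pos_of_pos_of_lt_pi h1 (by linarith)
    have hlamlb : π / θ ^ 2 ≤ lam θ := by
      unfold lam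
      rw [div_le_div_iff₀ (by positivity) (by positivity)]
      have hsin2 : Real.sin θ ^ 2 ≤ θ ^ 2 := by nlinarith
      nlinarith [mul_nonneg (mul_nonneg hpi.le (by linarith : (0:ℝ) ≤ Real.cos θ - 1/2))
        (sq_nonneg θ)]
    have h4 : 2 * (K + 1) ≤ π / θ ^ 2 := by
      rw [le_div_iff₀ (by positivity)]
      have h5 : θ ^ 2 * (2 * (K + 1)) < π := by
        have := (lt_div_iff₀ (by positivity : (0:ℝ) < 2 * (K + 1))).1 hθ2
        linarith
      linarith
    linarith
  have hdb : ∀ (c : ℝ) (t : ℝ → ℝ), |c| ≤ K →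
      (∀ θ ∈ Ioo (0 : ℝ) θ₀, lam θ * deriv t θ / Real.sqrt (deriv t θ ^ 2 + 1) = c) →
      ∀ θ ∈ Ioo (0 : ℝ) δ, |deriv t θ| ≤ M * θ ^ 2 := by
    intro c t hcK hode θ hθ
    have hθ₀mem : θ ∈ Ioo (0 : ℝ) θ₀ := ⟨hθ.1, lt_of_lt_of_le hθ.2 hδθ₀⟩
    have h1 := deriv_bd hθ.1 (le_trans hθ.2.le hδπ3)
      (le_trans (by linarith [hcK] : 2 * |c| ≤ 2 * K) (hlamc θ hθ)) (hode θ hθ₀mem)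
    refine h1.trans ?_
    have : 2 * |c| / π ≤ M := by rw [hM]; gcongr
    have hθ2 : (0:ℝ) ≤ θ ^ 2 := sq_nonneg θ
    gcongr
  have hv₁ : ∀ θ ∈ Ioo (0 : ℝ) δ, |t₁ θ - T| ≤ M * θ ^ 3 := fun θ hθ =>
    val_bd hδθ₀ hM0 ht₁ (hdb c₁ t₁ (le_max_left _ _) hode₁) hlim₁ hθ
  have hv₂ : ∀ θ ∈ Ioo (0 : ℝ) δ, |t₂ θ - T| ≤ M * θ ^ 3 := fun θ hθ =>
    val_bd hδθ₀ hM0 ht₂ (hdb c₂ t₂ (le_max_right _ _) hode₂) hlim₂ hθ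
  rw [isBigO_iff]
  refine ⟨π ^ 3 * M, ?_⟩
  filter_upwards [Ioo_mem_nhdsGT_of_mem (left_mem_Ico.2 hδpos)] with θ hθ
  obtain ⟨h1, h2⟩ := hθ
  have hθ₀mem : θ ∈ Ioo (0 : ℝ) θ₀ := ⟨h1, lt_of_lt_of_le h2 hδθ₀⟩
  have hsinpos : 0 < Real.sin θ := Real.sin_pos_of_pos_of_lt_pi h1
    (by linarith [le_trans h2.le hδπ3])
  have hsinlb : 2 / π * θ ≤ Real.sin θ :=
    Real.mul_le_sin h1.le (by linarith [le_trans h2.le hδπ3])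
  have hcos1 : Real.cos θ ≤ 1 := Real.cos_le_one θ
  have hlamub : lam θ ≤ π ^ 3 / (2 * θ ^ 2) := by
    unfold lam
    rw [div_le_div_iff₀ (by positivity) (by positivity)]
    have hs2 : (2 / π * θ) ^ 2 ≤ Real.sin θ ^ 2 := by
      have h0 : (0:ℝ) ≤ 2 / π * θ := by positivity
      gcongr
    have hexp : (2 / π * θ) ^ 2 = 4 * θ ^ 2 / π ^ 2 := by field_simp; ring
    rw [hexp] at hs2
    have h5 : 2 * π * Real.cos θ ≤ 2 * π := by nlinarith
    calc 2 * π * Real.cos θ * (2 * θ ^ 2) ≤ 2 * π * (2 * θ ^ 2) := by nlinarith [sq_nonneg θ]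
      _ = π ^ 3 * (4 * θ ^ 2 / π ^ 2) := by field_simp; ring
      _ ≤ π ^ 3 * Real.sin θ ^ 2 := by gcongr
  have hL : 0 ≤ lam θ := (lam_pos h1 (by linarith [le_trans h2.le hδπ3])).le
  have hdiff : |t₁ θ - t₂ θ| ≤ 2 * M * θ ^ 3 := by
    calc |t₁ θ - t₂ θ| = |(t₁ θ - T) - (t₂ θ - T)| := by ring_nf
      _ ≤ |t₁ θ - T| + |t₂ θ - T| := abs_sub _ _
      _ ≤ M * θ ^ 3 + M * θ ^ 3 := add_le_add (hv₁ θ ⟨h1, h2⟩) (hv₂ θ ⟨h1, h2⟩)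
      _ = 2 * M * θ ^ 3 := by ring
  have hnorm : ‖vertLen t₁ t₂ θ‖ = lam θ * |t₁ θ - t₂ θ| := by
    rw [Real.norm_eq_abs, habs θ hθ₀mem, abs_of_nonneg (mul_nonneg hL (abs_nonneg _))]
  rw [hnorm, Real.norm_eq_abs, abs_of_pos h1]
  calc lam θ * |t₁ θ - t₂ θ| ≤ (π ^ 3 / (2 * θ ^ 2)) * (2 * M * θ ^ 3) := by
        exact mul_le_mul hlamub hdiff (abs_nonneg _) (by positivity)
    _ = π ^ 3 * M * θ := by field_simp
end
end

section
/- In hyperbolic 3-space (upper half-space model), let C be a half-catenoid with axis Z and let D be another half-catenoid or totally geodesic disk with the same ideal boundary circle as C. For s large let Σ(s) be the portion of the hyperbolic cylinder ∂Cyl(s) (points at distance exactly s from Z) lying between C and D. Then area(Σ(s)) → 0 as s → ∞. -/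
open Real Set MeasureTheory Filter
open scoped ENNReal Topology

noncomputable section

abbrev E3 := EuclideanSpace ℝ (Fin 3)

/-- Hyperbolic area in the upper half-space model: the Euclidean area element
weighted by `1/z²`. -/
def hypArea (S : Set E3) : ℝ≥0∞ :=
  ∫⁻ x in S, ENNReal.ofReal (1 / (x 2) ^ 2) ∂(μH[2] : Measure E3)

/-- The angle `α(s)` such that the hyperbolic cylinder `∂Cyl(s)` of radius `s` about
the axis `Z` is the Euclidean cone `{θ = α(s)}`, i.e. `s = |ln tan(α/2)|`. -/
def coneAngle (s : ℝ) : ℝ := 2 * Real.arctan (Real.exp (-s))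


abbrev E2 := EuclideanSpace ℝ (Fin 2)


lemma lam_lower {θ : ℝ} (h0 : 0 < θ) (h1 : θ ≤ 1) : π / θ ^ 2 ≤ lam θ := by
  have hs : 0 < Real.sin θ := Real.sin_pos_of_pos_of_lt_pi h0 (by linarith [Real.pi_gt_three])
  have hsθ : Real.sin θ ≤ θ := Real.sin_le h0.le
  have hc : (1:ℝ)/2 ≤ Real.cos θ := by
    have := Real.one_sub_sq_div_two_le_cos (x := θ)
    nlinarith
  have h2 : Real.sin θ ^ 2 ≤ θ ^ 2 := by nlinarith
  rw [lam, div_le_div_iff₀ (by positivity) (by positivity)]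
  have k1 : 0 ≤ π * (θ ^ 2 - Real.sin θ ^ 2) :=
    mul_nonneg Real.pi_pos.le (by linarith)
  have k2 : 0 ≤ π * θ ^ 2 * (2 * Real.cos θ - 1) :=
    mul_nonneg (mul_nonneg Real.pi_pos.le (sq_nonneg θ)) (by linarith)
  nlinarith [k1, k2]

lemma abs_deriv_le {c L d : ℝ} (hL : 0 < L) (hLc : 2 * |c| ≤ L)
    (h : L * d / Real.sqrt (d ^ 2 + 1) = c) : |d| ≤ 2 * |c| / L := by
  have hs : 0 < Real.sqrt (d ^ 2 + 1) := Real.sqrt_pos.2 (by positivity)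
  have h1 : L * d = c * Real.sqrt (d ^ 2 + 1) := by
    field_simp at h; linarith
  have hsle : Real.sqrt (d ^ 2 + 1) ≤ |d| + 1 := by
    have h2 : d ^ 2 + 1 ≤ (|d| + 1) ^ 2 := by nlinarith [abs_nonneg d, sq_abs d]
    calc Real.sqrt (d ^ 2 + 1) ≤ Real.sqrt ((|d| + 1) ^ 2) := Real.sqrt_le_sqrt h2
    _ = |d| + 1 := Real.sqrt_sq (by positivity)
  have h2 : L * |d| = |c| * Real.sqrt (d ^ 2 + 1) := by
    have := congrArg abs h1
    rwa [abs_mul, abs_mul, abs_of_pos hL, abs_of_nonneg hs.le] at this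
  rw [le_div_iff₀ hL]
  nlinarith [abs_nonneg c, abs_nonneg d]

lemma abs_sub_lim_le {t : ℝ → ℝ} {T K α : ℝ} (hα : 0 < α) (hK : 0 ≤ K)
    (hdiff : ∀ x ∈ Ioc (0:ℝ) α, DifferentiableAt ℝ t x)
    (hbd : ∀ x ∈ Ioc (0:ℝ) α, |deriv t x| ≤ K)
    (hlim : Tendsto t (𝓝[>] 0) (𝓝 T)) : |t α - T| ≤ K * α := by
  have key : ∀ θ ∈ Ioo (0:ℝ) α, |t α - t θ| ≤ K * α := by
    intro θ hθ
    have hsub : Icc θ α ⊆ Ioc 0 α := fun x hx => ⟨lt_of_lt_of_le hθ.1 hx.1, hx.2⟩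
    have hud : UniqueDiffOn ℝ (Icc θ α) := uniqueDiffOn_Icc hθ.2
    have hf : DifferentiableOn ℝ t (Icc θ α) :=
      fun x hx => (hdiff x (hsub hx)).differentiableWithinAt
    have bound : ∀ x ∈ Ico θ α, ‖derivWithin t (Icc θ α) x‖ ≤ K := by
      intro x hx
      have hx' : x ∈ Icc θ α := ⟨hx.1, hx.2.le⟩
      rw [(hdiff x (hsub hx')).derivWithin (hud x hx'), Real.norm_eq_abs]
      exact hbd x (hsub hx')
    have := norm_image_sub_le_of_norm_deriv_le_segment hf bound α
      ⟨hθ.2.le, le_refl _⟩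
    rw [Real.norm_eq_abs] at this
    have habs : K * (α - θ) ≤ K * α := by nlinarith [hθ.1]
    linarith
  have htend : Tendsto (fun θ => |t α - t θ|) (𝓝[>] (0:ℝ)) (𝓝 |t α - T|) :=
    (tendsto_const_nhds.sub hlim).abs
  refine le_of_tendsto htend ?_
  filter_upwards [Ioo_mem_nhdsGT_of_mem (left_mem_Ico.2 hα)] with θ hθ using key θ hθ

lemma deriv_le_of_ode {c : ℝ} {t : ℝ → ℝ} {θ : ℝ}
    (h : lam θ * deriv t θ / Real.sqrt (deriv t θ ^ 2 + 1) = c)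
    (h0 : 0 < θ) (h1 : θ ≤ 1) (hsm : θ ^ 2 * (2 * |c|) ≤ π) :
    |deriv t θ| ≤ |c| * θ ^ 2 := by
  have hL : π / θ ^ 2 ≤ lam θ := lam_lower h0 h1
  have hLpos : 0 < lam θ := lt_of_lt_of_le (by positivity) hL
  have hLc : 2 * |c| ≤ lam θ := by
    refine le_trans ?_ hL
    rw [le_div_iff₀ (by positivity)]
    linarith [hsm]
  have h2 := abs_deriv_le hLpos hLc h
  rw [le_div_iff₀ hLpos] at h2
  have hL' : π ≤ lam θ * θ ^ 2 := by
    rwa [div_le_iff₀ (by positivity)] at hL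
  nlinarith [mul_le_mul_of_nonneg_left hL' (abs_nonneg (deriv t θ)),
    mul_le_mul_of_nonneg_right h2 (sq_nonneg θ), Real.pi_gt_three,
    abs_nonneg c, sq_nonneg θ, abs_nonneg (deriv t θ),
    mul_nonneg (abs_nonneg c) (sq_nonneg θ)]

def nrm (p : Fin 2 → ℝ) : ℝ := Real.sqrt ((p 0) ^ 2 + (p 1) ^ 2)

def fmap (α : ℝ) (p : Fin 2 → ℝ) : E3 :=
  (WithLp.equiv 2 (Fin 3 → ℝ)).symm ![p 0, p 1, nrm p * Real.tan α]

lemma norm3 (x : E3) : ‖x‖ = Real.sqrt ((x 0) ^ 2 + (x 1) ^ 2 + (x 2) ^ 2) := by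
  rw [EuclideanSpace.norm_eq]
  simp [Fin.sum_univ_three, sq_abs]

lemma norm2 (y : E2) : ‖y‖ = Real.sqrt ((y 0) ^ 2 + (y 1) ^ 2) := by
  rw [EuclideanSpace.norm_eq]
  simp [Fin.sum_univ_two, sq_abs]

lemma nrm_nonneg (p : Fin 2 → ℝ) : 0 ≤ nrm p := Real.sqrt_nonneg _

lemma continuous_nrm : Continuous nrm := by
  apply Real.continuous_sqrt.comp
  fun_prop

lemma nrm_sub_le (p q : Fin 2 → ℝ) : |nrm p - nrm q| ≤ Real.sqrt 2 * dist p q := by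
  set g : (Fin 2 → ℝ) → E2 := fun v => (WithLp.equiv 2 (Fin 2 → ℝ)).symm v with hg
  have hgn : ∀ v, ‖g v‖ = nrm v := by
    intro v
    rw [norm2, nrm]
    simp [g, WithLp.equiv_symm_apply]
  have h1 : |nrm p - nrm q| ≤ ‖g p - g q‖ := by
    rw [← hgn p, ← hgn q]; exact abs_norm_sub_norm_le _ _
  have h2 : g p - g q = g (p - q) := by
    simp [g, WithLp.equiv_symm_apply]
  have h3 : ‖g (p - q)‖ ≤ Real.sqrt 2 * dist p q := by
    rw [hgn]
    have hd0 : |p 0 - q 0| ≤ dist p q := by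
      simpa [Real.dist_eq] using dist_le_pi_dist p q 0
    have hd1 : |p 1 - q 1| ≤ dist p q := by
      simpa [Real.dist_eq] using dist_le_pi_dist p q 1
    have hdn : (0:ℝ) ≤ dist p q := dist_nonneg
    have : (p 0 - q 0) ^ 2 + (p 1 - q 1) ^ 2 ≤ 2 * dist p q ^ 2 := by
      nlinarith [sq_abs (p 0 - q 0), sq_abs (p 1 - q 1), abs_nonneg (p 0 - q 0),
        abs_nonneg (p 1 - q 1)]
    calc nrm (p - q) = Real.sqrt ((p 0 - q 0) ^ 2 + (p 1 - q 1) ^ 2) := by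
          simp [nrm]
    _ ≤ Real.sqrt (2 * dist p q ^ 2) := Real.sqrt_le_sqrt this
    _ = Real.sqrt 2 * dist p q := by
          rw [Real.sqrt_mul (by norm_num), Real.sqrt_sq hdn]
  calc |nrm p - nrm q| ≤ ‖g p - g q‖ := h1
  _ = ‖g (p - q)‖ := by rw [h2]
  _ ≤ Real.sqrt 2 * dist p q := h3

lemma fmap_apply (α : ℝ) (p : Fin 2 → ℝ) :
    fmap α p 0 = p 0 ∧ fmap α p 1 = p 1 ∧ fmap α p 2 = nrm p * Real.tan α := by
  refine ⟨?_, ?_, ?_⟩ <;> simp [fmap, WithLp.equiv_symm_apply]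

lemma fmap_lipschitz {α : ℝ} (hc : 0 < Real.cos α) :
    LipschitzWith (Real.toNNReal (Real.sqrt 2 / Real.cos α)) (fmap α) := by
  apply LipschitzWith.of_dist_le_mul
  intro p q
  rw [Real.coe_toNNReal _ (by positivity), dist_eq_norm]
  set d := dist p q with hd
  have hdn : (0:ℝ) ≤ d := dist_nonneg
  have hd0 : |p 0 - q 0| ≤ d := by simpa [Real.dist_eq] using dist_le_pi_dist p q 0
  have hd1 : |p 1 - q 1| ≤ d := by simpa [Real.dist_eq] using dist_le_pi_dist p q 1
  have hA : |nrm p - nrm q| ≤ Real.sqrt 2 * d := nrm_sub_le p q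
  have hsqrt2 : Real.sqrt 2 ^ 2 = 2 := Real.sq_sqrt (by norm_num)
  have hA2 : (nrm p - nrm q) ^ 2 ≤ 2 * d ^ 2 := by
    nlinarith [sq_abs (nrm p - nrm q), abs_nonneg (nrm p - nrm q), Real.sqrt_nonneg 2]
  have key : (p 0 - q 0) ^ 2 + (p 1 - q 1) ^ 2 +
      (nrm p * Real.tan α - nrm q * Real.tan α) ^ 2 ≤ (Real.sqrt 2 / Real.cos α * d) ^ 2 := by
    rw [Real.tan_eq_sin_div_cos]
    have hpyth := Real.sin_sq_add_cos_sq α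
    have e1 : nrm p * (Real.sin α / Real.cos α) - nrm q * (Real.sin α / Real.cos α)
        = (nrm p - nrm q) * Real.sin α / Real.cos α := by ring
    rw [e1]
    have hc2 : (0:ℝ) < Real.cos α ^ 2 := by positivity
    have hmain : ((p 0 - q 0) ^ 2 + (p 1 - q 1) ^ 2) * Real.cos α ^ 2 +
        ((nrm p - nrm q) * Real.sin α) ^ 2 ≤ 2 * d ^ 2 := by
      have k0 : (p 0 - q 0) ^ 2 ≤ d ^ 2 := by
        nlinarith [sq_abs (p 0 - q 0), abs_nonneg (p 0 - q 0)]
      have k1 : (p 1 - q 1) ^ 2 ≤ d ^ 2 := by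
        nlinarith [sq_abs (p 1 - q 1), abs_nonneg (p 1 - q 1)]
      have k2 : ((nrm p - nrm q) * Real.sin α) ^ 2
          = (nrm p - nrm q) ^ 2 * Real.sin α ^ 2 := by ring
      have k3 : 2 * d ^ 2 * (Real.sin α ^ 2 + Real.cos α ^ 2) = 2 * d ^ 2 := by
        rw [hpyth]; ring
      rw [k2]
      nlinarith [mul_le_mul_of_nonneg_right hA2 (sq_nonneg (Real.sin α)),
        mul_le_mul_of_nonneg_right (add_le_add k0 k1) (sq_nonneg (Real.cos α))]
    calc (p 0 - q 0) ^ 2 + (p 1 - q 1) ^ 2 + ((nrm p - nrm q) * Real.sin α / Real.cos α) ^ 2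
        = (((p 0 - q 0) ^ 2 + (p 1 - q 1) ^ 2) * Real.cos α ^ 2 +
            ((nrm p - nrm q) * Real.sin α) ^ 2) / Real.cos α ^ 2 := by
          field_simp
      _ ≤ 2 * d ^ 2 / Real.cos α ^ 2 := by
          exact (div_le_div_iff_of_pos_right hc2).mpr hmain
      _ = (Real.sqrt 2 / Real.cos α * d) ^ 2 := by
          rw [mul_pow, div_pow, hsqrt2]; ring
  have hsubi : ∀ i : Fin 3, (fmap α p - fmap α q) i = fmap α p i - fmap α q i := by
    intro i; rfl
  obtain ⟨hp0, hp1, hp2⟩ := fmap_apply α p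
  obtain ⟨hq0, hq1, hq2⟩ := fmap_apply α q
  rw [norm3]
  simp only [hsubi, hp0, hp1, hp2, hq0, hq1, hq2]
  calc Real.sqrt ((p 0 - q 0) ^ 2 + (p 1 - q 1) ^ 2 +
        (nrm p * Real.tan α - nrm q * Real.tan α) ^ 2)
      ≤ Real.sqrt ((Real.sqrt 2 / Real.cos α * d) ^ 2) := Real.sqrt_le_sqrt key
    _ = Real.sqrt 2 / Real.cos α * d := Real.sqrt_sq (by positivity)

lemma ribbon_bound {α a b : ℝ} (hα0 : 0 < α) (hα2 : α < π / 2) :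
    hypArea {x : E3 | 0 < x 2 ∧ ¬(x 0 = 0 ∧ x 1 = 0) ∧
        Real.arcsin (x 2 / ‖x‖) = α ∧ Real.log ‖x‖ ∈ Set.uIcc a b}
      ≤ ENNReal.ofReal ((2 / Real.sin α ^ 2) *
          (Real.exp (2 * (max a b - min a b)) - 1)) *
        volume (Metric.ball (0 : E2) 1) := by
  have hc : 0 < Real.cos α := Real.cos_pos_of_mem_Ioo ⟨by linarith [Real.pi_pos], hα2⟩
  have hs : 0 < Real.sin α := Real.sin_pos_of_pos_of_lt_pi hα0 (by linarith [Real.pi_pos])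
  set m := min a b with hm
  set M := max a b with hM
  set r₁ := Real.exp m with hr₁def
  set r₂ := Real.exp M with hr₂def
  have hr₁ : 0 < r₁ := Real.exp_pos m
  have hr₂ : 0 < r₂ := Real.exp_pos M
  have hr₁₂ : r₁ ≤ r₂ := Real.exp_le_exp.2 min_le_max
  set S := {x : E3 | 0 < x 2 ∧ ¬(x 0 = 0 ∧ x 1 = 0) ∧
        Real.arcsin (x 2 / ‖x‖) = α ∧ Real.log ‖x‖ ∈ Set.uIcc a b} with hSdef
  set A := {p : Fin 2 → ℝ | nrm p ∈ Icc (r₁ * Real.cos α) (r₂ * Real.cos α)} with hAdef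
  -- x ∈ S basic facts
  have hfacts : ∀ x ∈ S, 0 < ‖x‖ ∧ x 2 = ‖x‖ * Real.sin α ∧ r₁ ≤ ‖x‖ ∧ ‖x‖ ≤ r₂ := by
    rintro x ⟨hx2, -, harc, hlog⟩
    have hxne : x ≠ 0 := by
      intro h; rw [h] at hx2; simp at hx2
    have hxn : 0 < ‖x‖ := norm_pos_iff.2 hxne
    have hx2le : x 2 ≤ ‖x‖ := by
      have h1 : Real.sqrt ((x 2) ^ 2) ≤ ‖x‖ := by
        rw [norm3]
        exact Real.sqrt_le_sqrt (by nlinarith [sq_nonneg (x 0), sq_nonneg (x 1)])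
      rw [Real.sqrt_sq_eq_abs] at h1
      exact (le_abs_self _).trans h1
    have hub : x 2 / ‖x‖ ≤ 1 := by rw [div_le_one hxn]; exact hx2le
    have hlb : (-1 : ℝ) ≤ x 2 / ‖x‖ := by
      have : (0:ℝ) ≤ x 2 / ‖x‖ := by positivity
      linarith
    have hsin : Real.sin α = x 2 / ‖x‖ := by rw [← harc, Real.sin_arcsin hlb hub]
    have hx2eq : x 2 = ‖x‖ * Real.sin α := by rw [hsin]; field_simp
    have hlog' : m ≤ Real.log ‖x‖ ∧ Real.log ‖x‖ ≤ M := by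
      rcases Set.mem_uIcc.1 hlog with h | h
      · exact ⟨le_trans (min_le_left a b) h.1, le_trans h.2 (le_max_right a b)⟩
      · exact ⟨le_trans (min_le_right a b) h.1, le_trans h.2 (le_max_left a b)⟩
    have h₁ : r₁ ≤ ‖x‖ := by
      rw [hr₁def, ← Real.exp_log hxn]; exact Real.exp_le_exp.2 hlog'.1
    have h₂ : ‖x‖ ≤ r₂ := by
      rw [hr₂def, ← Real.exp_log hxn]; exact Real.exp_le_exp.2 hlog'.2
    exact ⟨hxn, hx2eq, h₁, h₂⟩
  have hsub : S ⊆ fmap α '' A := by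
    intro x hx
    obtain ⟨hxn, hx2eq, h₁, h₂⟩ := hfacts x hx
    have hxsq : ‖x‖ ^ 2 = (x 0) ^ 2 + (x 1) ^ 2 + (x 2) ^ 2 := by
      rw [norm3]; exact Real.sq_sqrt (by positivity)
    have hhor : (x 0) ^ 2 + (x 1) ^ 2 = (‖x‖ * Real.cos α) ^ 2 := by
      have hcos2 : Real.cos α ^ 2 = 1 - Real.sin α ^ 2 := by
        linarith [Real.sin_sq_add_cos_sq α]
      have h1 : (‖x‖ * Real.cos α) ^ 2 = ‖x‖ ^ 2 - (‖x‖ * Real.sin α) ^ 2 := by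
        rw [mul_pow, mul_pow, hcos2]; ring
      rw [h1, ← hx2eq, hxsq]; ring
    set p : Fin 2 → ℝ := ![x 0, x 1] with hp
    have hp0 : p 0 = x 0 := rfl
    have hp1 : p 1 = x 1 := rfl
    have hnrmp : nrm p = ‖x‖ * Real.cos α := by
      rw [nrm, hp0, hp1, hhor, Real.sqrt_sq (by positivity)]
    have hmemA : p ∈ A := by
      rw [hAdef, Set.mem_setOf_eq, hnrmp]
      exact ⟨mul_le_mul_of_nonneg_right h₁ hc.le, mul_le_mul_of_nonneg_right h₂ hc.le⟩
    refine ⟨p, hmemA, ?_⟩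
    obtain ⟨hf0, hf1, hf2⟩ := fmap_apply α p
    apply PiLp.ext
    intro i
    fin_cases i
    · simpa [hp0] using hf0
    · simpa [hp1] using hf1
    · show fmap α p 2 = x 2
      rw [hf2, hnrmp, Real.tan_eq_sin_div_cos, hx2eq]
      field_simp
  -- measure of A
  have hAmeas : MeasurableSet A :=
    (measurableSet_Icc).preimage continuous_nrm.measurable
  have hAvol : volume A ≤ ENNReal.ofReal ((r₂ * Real.cos α) ^ 2 - (r₁ * Real.cos α) ^ 2) *
      volume (Metric.ball (0 : E2) 1) := by
    have hmp := (EuclideanSpace.volume_preserving_symm_measurableEquiv_toLp (Fin 2))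
    have hpre : volume A = volume ((MeasurableEquiv.toLp 2 (Fin 2 → ℝ)).symm ⁻¹' A) :=
      (hmp.measure_preimage hAmeas.nullMeasurableSet).symm
    have hpresub : (MeasurableEquiv.toLp 2 (Fin 2 → ℝ)).symm ⁻¹' A ⊆
        Metric.closedBall (0 : E2) (r₂ * Real.cos α) \ Metric.ball (0 : E2) (r₁ * Real.cos α) := by
      intro y hy
      have hyA : nrm (fun i => y i) ∈ Icc (r₁ * Real.cos α) (r₂ * Real.cos α) := hy
      have hynrm : nrm (fun i => y i) = ‖y‖ := by rw [norm2, nrm]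
      rw [hynrm] at hyA
      constructor
      · rw [Metric.mem_closedBall, dist_zero_right]; exact hyA.2
      · rw [Metric.mem_ball, dist_zero_right]; push_neg; exact hyA.1
    have hdiff : volume (Metric.closedBall (0 : E2) (r₂ * Real.cos α) \
        Metric.ball (0 : E2) (r₁ * Real.cos α)) =
        ENNReal.ofReal ((r₂ * Real.cos α) ^ 2) * volume (Metric.ball (0 : E2) 1) -
        ENNReal.ofReal ((r₁ * Real.cos α) ^ 2) * volume (Metric.ball (0 : E2) 1) := by
      have hcb : volume (Metric.closedBall (0 : E2) (r₂ * Real.cos α)) =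
          ENNReal.ofReal ((r₂ * Real.cos α) ^ 2) * volume (Metric.ball (0 : E2) 1) := by
        rw [Measure.addHaar_closedBall volume _ (by positivity), finrank_euclideanSpace_fin]
      have hb : volume (Metric.ball (0 : E2) (r₁ * Real.cos α)) =
          ENNReal.ofReal ((r₁ * Real.cos α) ^ 2) * volume (Metric.ball (0 : E2) 1) := by
        rw [Measure.addHaar_ball volume _ (by positivity), finrank_euclideanSpace_fin]
      rw [measure_diff (Metric.ball_subset_closedBall.trans
          (Metric.closedBall_subset_closedBall (by nlinarith)))
          measurableSet_ball.nullMeasurableSet measure_ball_lt_top.ne, hcb, hb]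
    calc volume A = volume ((MeasurableEquiv.toLp 2 (Fin 2 → ℝ)).symm ⁻¹' A) := hpre
      _ ≤ volume (Metric.closedBall (0 : E2) (r₂ * Real.cos α) \
            Metric.ball (0 : E2) (r₁ * Real.cos α)) := measure_mono hpresub
      _ = _ := hdiff
      _ ≤ ENNReal.ofReal ((r₂ * Real.cos α) ^ 2 - (r₁ * Real.cos α) ^ 2) *
            volume (Metric.ball (0 : E2) 1) := by
          rw [← ENNReal.sub_mul (fun _ _ => measure_ball_lt_top.ne),
            ← ENNReal.ofReal_sub _ (by positivity)]
  -- Hausdorff measure of S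
  have hHS : (μH[2] : Measure E3) S ≤ ENNReal.ofReal (2 / Real.cos α ^ 2) * volume A := by
    have hlip := (fmap_lipschitz hc).hausdorffMeasure_image_le (by norm_num : (0:ℝ) ≤ 2) A
    have hKpow : ((Real.toNNReal (Real.sqrt 2 / Real.cos α) : ℝ≥0∞)) ^ (2 : ℝ) =
        ENNReal.ofReal (2 / Real.cos α ^ 2) := by
      have h1 : ((Real.toNNReal (Real.sqrt 2 / Real.cos α) : ℝ≥0∞)) =
          ENNReal.ofReal (Real.sqrt 2 / Real.cos α) := rfl
      rw [h1, ENNReal.ofReal_rpow_of_nonneg (by positivity) (by norm_num)]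
      congr 1
      rw [show (2:ℝ) = ((2:ℕ):ℝ) by norm_num, Real.rpow_natCast, div_pow]
      push_cast
      rw [Real.sq_sqrt (by norm_num : (0:ℝ) ≤ 2)]
    have hpiH : (μH[(2:ℝ)] : Measure (Fin 2 → ℝ)) A = volume A := by
      have h := hausdorffMeasure_pi_real (ι := Fin 2)
      rw [Fintype.card_fin] at h
      rw [show ((2:ℕ):ℝ) = (2:ℝ) by norm_num] at h
      rw [h]
    calc (μH[2] : Measure E3) S ≤ (μH[2] : Measure E3) (fmap α '' A) := measure_mono hsub
      _ ≤ ((Real.toNNReal (Real.sqrt 2 / Real.cos α) : ℝ≥0∞)) ^ (2:ℝ) *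
            (μH[(2:ℝ)] : Measure (Fin 2 → ℝ)) A := hlip
      _ = ENNReal.ofReal (2 / Real.cos α ^ 2) * volume A := by rw [hKpow, hpiH]
  -- the integral bound
  have hconst : hypArea S ≤ ENNReal.ofReal (1 / (r₁ * Real.sin α) ^ 2) *
      (μH[2] : Measure E3) S := by
    rw [hypArea]
    calc ∫⁻ x in S, ENNReal.ofReal (1 / (x 2) ^ 2) ∂(μH[2] : Measure E3)
        ≤ ∫⁻ _ in S, ENNReal.ofReal (1 / (r₁ * Real.sin α) ^ 2) ∂(μH[2] : Measure E3) := by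
          apply setLIntegral_mono measurable_const
          intro x hx
          obtain ⟨hxn, hx2eq, h₁, h₂⟩ := hfacts x hx
          apply ENNReal.ofReal_le_ofReal
          have hx2pos : 0 < x 2 := by rw [hx2eq]; positivity
          have hge : r₁ * Real.sin α ≤ x 2 := by
            rw [hx2eq]; exact mul_le_mul_of_nonneg_right h₁ hs.le
          have h0 : 0 < r₁ * Real.sin α := by positivity
          apply one_div_le_one_div_of_le (by positivity)
          nlinarith
      _ = ENNReal.ofReal (1 / (r₁ * Real.sin α) ^ 2) * (μH[2] : Measure E3) S :=
          setLIntegral_const S _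
  -- assemble
  have hchain : hypArea S ≤ ENNReal.ofReal (1 / (r₁ * Real.sin α) ^ 2) *
      (ENNReal.ofReal (2 / Real.cos α ^ 2) *
        (ENNReal.ofReal ((r₂ * Real.cos α) ^ 2 - (r₁ * Real.cos α) ^ 2) *
          volume (Metric.ball (0 : E2) 1))) := by
    calc hypArea S ≤ ENNReal.ofReal (1 / (r₁ * Real.sin α) ^ 2) *
        (μH[2] : Measure E3) S := hconst
      _ ≤ _ := by
          apply mul_le_mul_right
          calc (μH[2] : Measure E3) S ≤ ENNReal.ofReal (2 / Real.cos α ^ 2) * volume A := hHS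
            _ ≤ _ := mul_le_mul_right hAvol _
  refine le_trans hchain (le_of_eq ?_)
  rw [← mul_assoc, ← mul_assoc, ← ENNReal.ofReal_mul (by positivity),
    ← ENNReal.ofReal_mul (by positivity)]
  congr 1
  apply congrArg
  have hexp : r₂ ^ 2 = Real.exp (2 * (M - m)) * r₁ ^ 2 := by
    rw [hr₁def, hr₂def, sq, sq, ← Real.exp_add, ← Real.exp_add, ← Real.exp_add]
    congr 1; ring
  field_simp
  linear_combination hexp

lemma exp_sub_one_le {y : ℝ} (hy : 0 ≤ y) : Real.exp y - 1 ≤ y * Real.exp y := by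
  have h := Real.add_one_le_exp (-y)
  have hmul : Real.exp (-y) * Real.exp y = 1 := by
    rw [← Real.exp_add]; simp
  nlinarith [Real.exp_pos y, mul_le_mul_of_nonneg_right h (Real.exp_pos y).le]


set_option maxHeartbeats 2000000 in
/-- Vanishing ribbon area: let `C` be a half-catenoid with axis `Z` (profile `t₁` with
`c₁ ≠ 0`) and `D` another half-catenoid or totally geodesic disk (profile `t₂`) with
the same ideal boundary circle (same limit `T` of the profiles as `θ → 0⁺`).  For
large `s`, let `Σ(s)` be the portion of the cylinder `∂Cyl(s)` between `C` and `D`.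
Then `area(Σ(s)) → 0` as `s → ∞`. -/
theorem ribbon_area_tendsto_zero (θ₀ c₁ c₂ T : ℝ) (hθ₀ : 0 < θ₀) (hθ₀' : θ₀ ≤ π / 2)
    (hc₁ : c₁ ≠ 0)
    (t₁ t₂ : ℝ → ℝ)
    (ht₁ : ContDiffOn ℝ (⊤ : ℕ∞) t₁ (Ioo 0 θ₀)) (ht₂ : ContDiffOn ℝ (⊤ : ℕ∞) t₂ (Ioo 0 θ₀))
    (hode₁ : ∀ θ ∈ Ioo (0 : ℝ) θ₀,
      lam θ * deriv t₁ θ / Real.sqrt (deriv t₁ θ ^ 2 + 1) = c₁)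
    (hode₂ : ∀ θ ∈ Ioo (0 : ℝ) θ₀,
      lam θ * deriv t₂ θ / Real.sqrt (deriv t₂ θ ^ 2 + 1) = c₂)
    (hlim₁ : Tendsto t₁ (𝓝[>] (0 : ℝ)) (𝓝 T))
    (hlim₂ : Tendsto t₂ (𝓝[>] (0 : ℝ)) (𝓝 T))
    (ribbon : ℝ → Set E3)
    (hribbon : ∀ s, ribbon s =
      {x : E3 | 0 < x 2 ∧ ¬(x 0 = 0 ∧ x 1 = 0) ∧
        Real.arcsin (x 2 / ‖x‖) = coneAngle s ∧
        Real.log ‖x‖ ∈ Set.uIcc (t₁ (coneAngle s)) (t₂ (coneAngle s))}) :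
    Tendsto (fun s => hypArea (ribbon s)) atTop (𝓝 (0 : ℝ≥0∞)) := by
  obtain ⟨K, hKdef⟩ : ∃ K : ℝ, K = |c₁| + |c₂| + 1 := ⟨_, rfl⟩
  have hK0 : 0 < K := by rw [hKdef]; positivity
  obtain ⟨θ', hθ'def⟩ : ∃ θ' : ℝ, θ' = min θ₀ (min 1 (Real.sqrt (π / (2 * K)))) := ⟨_, rfl⟩
  have hθ'pos : 0 < θ' := by
    rw [hθ'def]
    exact lt_min hθ₀ (lt_min one_pos (Real.sqrt_pos.2 (div_pos Real.pi_pos (by linarith))))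
  have hθ'le1 : θ' ≤ 1 := by
    rw [hθ'def]; exact le_trans (min_le_right _ _) (min_le_left _ _)
  have hθ'leθ₀ : θ' ≤ θ₀ := by rw [hθ'def]; exact min_le_left _ _
  have hθ'lesq : θ' ≤ Real.sqrt (π / (2 * K)) := by
    rw [hθ'def]; exact le_trans (min_le_right _ _) (min_le_right _ _)
  have hdiff₁ : ∀ x ∈ Ioo (0:ℝ) θ₀, DifferentiableAt ℝ t₁ x := fun x hx =>
    (ht₁.contDiffAt (isOpen_Ioo.mem_nhds hx)).differentiableAt (by simp)
  have hdiff₂ : ∀ x ∈ Ioo (0:ℝ) θ₀, DifferentiableAt ℝ t₂ x := fun x hx =>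
    (ht₂.contDiffAt (isOpen_Ioo.mem_nhds hx)).differentiableAt (by simp)
  -- derivative bounds
  have hbd : ∀ (t : ℝ → ℝ) (c : ℝ), |c| ≤ K →
      (∀ θ ∈ Ioo (0 : ℝ) θ₀, lam θ * deriv t θ / Real.sqrt (deriv t θ ^ 2 + 1) = c) →
      ∀ x ∈ Ioo (0:ℝ) θ', |deriv t x| ≤ K * x ^ 2 := by
    intro t c hcK hode x hx
    have hx0 : 0 < x := hx.1
    have hx1 : x ≤ 1 := le_trans hx.2.le hθ'le1
    have hxθ₀ : x ∈ Ioo (0:ℝ) θ₀ := ⟨hx0, lt_of_lt_of_le hx.2 hθ'leθ₀⟩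
    have hxsq : x ^ 2 ≤ π / (2 * K) := by
      have h1 : x ≤ Real.sqrt (π / (2 * K)) := le_trans hx.2.le hθ'lesq
      have h2 := Real.sq_sqrt (show (0:ℝ) ≤ π / (2 * K) from
        le_of_lt (div_pos Real.pi_pos (by linarith)))
      nlinarith [Real.sqrt_nonneg (π / (2 * K))]
    have hxs : x ^ 2 * (2 * |c|) ≤ π := by
      have h1 : x ^ 2 * (2 * |c|) ≤ x ^ 2 * (2 * K) :=
        mul_le_mul_of_nonneg_left (by linarith) (sq_nonneg x)
      have h2 : x ^ 2 * (2 * K) ≤ π := by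
        have h3 := mul_le_mul_of_nonneg_right hxsq (show (0:ℝ) ≤ 2 * K by linarith)
        rwa [div_mul_cancel₀ _ (show (2 * K : ℝ) ≠ 0 from ne_of_gt (by linarith))] at h3
      linarith
    have := deriv_le_of_ode (hode x hxθ₀) hx0 hx1 hxs
    calc |deriv t x| ≤ |c| * x ^ 2 := this
      _ ≤ K * x ^ 2 := mul_le_mul_of_nonneg_right hcK (sq_nonneg x)
  have hbd₁ := hbd t₁ c₁ (by rw [hKdef]; linarith [abs_nonneg c₂]) hode₁
  have hbd₂ := hbd t₂ c₂ (by rw [hKdef]; linarith [abs_nonneg c₁]) hode₂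
  -- cone angle facts
  have hconepos : ∀ s, 0 < coneAngle s := by
    intro s
    have h := Real.arctan_strictMono (Real.exp_pos (-s))
    rw [Real.arctan_zero] at h
    rw [coneAngle]; linarith
  have hcone : Tendsto coneAngle atTop (𝓝 0) := by
    have h1 : Tendsto (fun s : ℝ => Real.exp (-s)) atTop (𝓝 0) :=
      Real.tendsto_exp_atBot.comp tendsto_neg_atTop_atBot
    have h2 : Tendsto (fun s => Real.arctan (Real.exp (-s))) atTop (𝓝 0) := by
      have := (Real.continuous_arctan.tendsto 0).comp h1
      simpa [Function.comp_def] using this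
    have := h2.const_mul (2:ℝ)
    rw [mul_zero] at this
    exact this
  obtain ⟨C, hCdef⟩ : ∃ C : ℝ, C = 2 * π ^ 2 * K * Real.exp (4 * K) := ⟨_, rfl⟩
  have hC0 : 0 < C := by
    rw [hCdef]
    exact mul_pos (mul_pos (by positivity) hK0) (Real.exp_pos _)
  set v₁ := volume (Metric.ball (0 : E2) 1) with hv₁def
  -- eventual bound
  have hfinal : ∀ᶠ s in atTop, hypArea (ribbon s) ≤ ENNReal.ofReal (C * coneAngle s) * v₁ := by
    filter_upwards [hcone.eventually (eventually_lt_nhds hθ'pos)] with s hαs0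
    obtain ⟨α, hαdef⟩ : ∃ α : ℝ, α = coneAngle s := ⟨_, rfl⟩
    have hαs : α < θ' := by rw [hαdef]; exact hαs0
    have hα0 : 0 < α := by rw [hαdef]; exact hconepos s
    have hα1 : α ≤ 1 := le_trans hαs.le hθ'le1
    have hαpi : α < π / 2 := by nlinarith [Real.pi_gt_three]
    have hαθ' : α ∈ Ioo (0:ℝ) θ' := ⟨hα0, hαs⟩
    -- |t i α - T| ≤ K α³
    have hclose : ∀ (t : ℝ → ℝ), (∀ x ∈ Ioo (0:ℝ) θ₀, DifferentiableAt ℝ t x) →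
        (∀ x ∈ Ioo (0:ℝ) θ', |deriv t x| ≤ K * x ^ 2) →
        Tendsto t (𝓝[>] (0:ℝ)) (𝓝 T) → |t α - T| ≤ K * α ^ 2 * α := by
      intro t hdiff hb hlim
      apply abs_sub_lim_le hα0 (by positivity)
      · intro x hx
        exact hdiff x ⟨hx.1, lt_of_le_of_lt hx.2 (lt_of_lt_of_le hαs hθ'leθ₀)⟩
      · intro x hx
        have hxθ' : x ∈ Ioo (0:ℝ) θ' := ⟨hx.1, lt_of_le_of_lt hx.2 hαs⟩
        calc |deriv t x| ≤ K * x ^ 2 := hb x hxθ'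
          _ ≤ K * α ^ 2 := by
            apply mul_le_mul_of_nonneg_left _ hK0.le
            nlinarith [hx.1, hx.2]
      · exact hlim
    have hclose₁ := hclose t₁ hdiff₁ hbd₁ hlim₁
    have hclose₂ := hclose t₂ hdiff₂ hbd₂ hlim₂
    have hΔ : |t₁ α - t₂ α| ≤ 2 * K * α ^ 3 := by
      have h1 := abs_sub_le (t₁ α) T (t₂ α)
      have h2 : |T - t₂ α| = |t₂ α - T| := abs_sub_comm _ _
      nlinarith [hclose₁, hclose₂]
    -- real bound
    obtain ⟨Δ, hΔdef⟩ : ∃ d : ℝ, d = max (t₁ α) (t₂ α) - min (t₁ α) (t₂ α) := ⟨_, rfl⟩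
    have hΔeq : Δ = |t₁ α - t₂ α| := by
      rw [hΔdef]
      exact (max_sub_min_eq_abs _ _).trans (abs_sub_comm _ _)
    have hΔ0 : 0 ≤ Δ := by rw [hΔeq]; exact abs_nonneg _
    have hΔle : Δ ≤ 2 * K * α ^ 3 := by rw [hΔeq]; exact hΔ
    have hsinpos : 0 < Real.sin α := Real.sin_pos_of_pos_of_lt_pi hα0
      (by nlinarith [Real.pi_gt_three])
    have hsinlb : 2 / π * α ≤ Real.sin α :=
      Real.mul_le_sin hα0.le (by nlinarith [Real.pi_gt_three])
    have hreal : (2 / Real.sin α ^ 2) * (Real.exp (2 * Δ) - 1) ≤ C * α := by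
      have hKα3 : 4 * K * α ^ 3 ≤ 4 * K := by
        have hα3 : α ^ 3 ≤ 1 := pow_le_one₀ hα0.le hα1
        nlinarith [hK0]
      have e1 : Real.exp (2 * Δ) - 1 ≤ 4 * K * α ^ 3 * Real.exp (4 * K) := by
        have h2Δ : 2 * Δ ≤ 4 * K * α ^ 3 := by linarith
        have hexple : Real.exp (2 * Δ) ≤ Real.exp (4 * K) :=
          Real.exp_le_exp.2 (h2Δ.trans hKα3)
        calc Real.exp (2 * Δ) - 1 ≤ (2 * Δ) * Real.exp (2 * Δ) :=
              exp_sub_one_le (by linarith)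
          _ ≤ (4 * K * α ^ 3) * Real.exp (4 * K) :=
              mul_le_mul h2Δ hexple (Real.exp_pos _).le (by positivity)
      have h5 : (2 / π * α) ^ 2 ≤ Real.sin α ^ 2 := by
        nlinarith [hsinlb, mul_pos (div_pos two_pos Real.pi_pos) hα0]
      have e2 : 2 / Real.sin α ^ 2 ≤ 2 / (2 / π * α) ^ 2 :=
        div_le_div_of_nonneg_left (by norm_num) (by positivity) h5
      have e2' : 2 / (2 / π * α) ^ 2 = π ^ 2 / (2 * α ^ 2) := by
        field_simp
      have hexp1 : (0:ℝ) ≤ Real.exp (2 * Δ) - 1 := by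
        have := Real.one_le_exp (by linarith : (0:ℝ) ≤ 2 * Δ)
        linarith
      calc (2 / Real.sin α ^ 2) * (Real.exp (2 * Δ) - 1)
          ≤ (π ^ 2 / (2 * α ^ 2)) * ((4 * K * α ^ 3) * Real.exp (4 * K)) := by
            apply mul_le_mul (e2.trans (le_of_eq e2')) e1 hexp1 (by positivity)
        _ = C * α := by rw [hCdef]; field_simp; ring
    rw [hribbon s, ← hαdef]
    refine le_trans (ribbon_bound hα0 hαpi) ?_
    rw [← hΔdef]
    exact mul_le_mul_left (ENNReal.ofReal_le_ofReal hreal) _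
  -- squeeze
  have hg : Tendsto (fun s => ENNReal.ofReal (C * coneAngle s) * v₁) atTop (𝓝 0) := by
    have h : Tendsto (fun s => ENNReal.ofReal (C * coneAngle s)) atTop
        (𝓝 (ENNReal.ofReal (C * 0))) :=
      (ENNReal.continuous_ofReal.tendsto _).comp (hcone.const_mul C)
    rw [mul_zero, ENNReal.ofReal_zero] at h
    simpa using ENNReal.Tendsto.mul_const h (Or.inr measure_ball_lt_top.ne)
  exact tendsto_of_tendsto_of_tendsto_of_le_of_le' tendsto_const_nhds hg
    (Filter.Eventually.of_forall fun s => zero_le) hfinal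
end
end
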